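/- arXiv:1803.00632 — 8 statements merged into one kernel-verified Lean document; each statement's English description precedes it below -/
import Mathlib

section
/- For real p > 1 and real a > 0, b with |b| < a, the integral ∫₀^∞ (cosh(b x)/sinh(a x)) x^{p-1} dx equals (Γ(p)/(2a)^p) · (ζ(p, (a-b)/(2a)) + ζ(p, (a+b)/(2a))), where ζ(s,q) is the Hurwitz zeta function. -/
open Real MeasureTheory Set

/-!
Expanding `1 / sinh` as a geometric series gives, for `x > 0`,
`cosh (b x) / sinh (a x) = ∑ₙ (exp (-(2an + a - b) x) + exp (-(2an + a + b) x))`,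
a sum of exponentials with positive rates when `|b| < a`. Integrating termwise against
`x ^ (p - 1)` (the Mellin transform of `exp (-r x)` is `Γ(p) r ^ (-p)`, and all terms are positive)
and writing `(2an + c) ^ (-p) = (2a) ^ (-p) (n + c / (2a)) ^ (-p)` yields the two Hurwitz zeta
values.
-/

lemma hasSum_integral_mul_rpow_of_hasSum_exp {ι : Type*} [Countable ι] {r : ι → ℝ}
    {F : ℝ → ℝ} {p : ℝ} (hp : 0 < p) (hr : ∀ i, 0 < r i)
    (hF : ∀ x ∈ Ioi (0 : ℝ), HasSum (fun i ↦ rexp (-(r i * x))) (F x))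
    (hsum : Summable fun i ↦ r i ^ (-p)) :
    HasSum (fun i ↦ Gamma p * r i ^ (-p)) (∫ x in Ioi 0, F x * x ^ (p - 1)) := by
  have h := hasSum_mellin (a := fun _ ↦ (1 : ℂ)) (F := fun x ↦ (F x : ℂ)) (s := p)
    (fun i ↦ Or.inr (hr i)) (by simpa using hp)
    (fun x hx ↦ by simpa [neg_mul] using Complex.hasSum_ofReal.mpr (hF x hx))
    (by simpa [rpow_neg (hr _).le] using hsum)
  rw [← Complex.hasSum_ofReal]
  convert h using 1
  · ext i
    rw [Complex.ofReal_mul, ← Complex.Gamma_ofReal, Complex.ofReal_cpow (hr i).le, mul_one,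
      Complex.ofReal_neg, Complex.cpow_neg, div_eq_mul_inv]
  · refine integral_ofReal.symm.trans (setIntegral_congr_fun measurableSet_Ioi fun x hx ↦ ?_)
    simp [Complex.ofReal_cpow (le_of_lt hx), mul_comm]

lemma hasSum_exp_neg_odd_mul {t : ℝ} (ht : 0 < t) :
    HasSum (fun n : ℕ ↦ rexp (-((2 * n + 1) * t))) (1 / (2 * sinh t)) := by
  have hq : rexp (-(2 * t)) < 1 := exp_lt_one_iff.mpr (by linarith)
  have hval : 1 / (2 * sinh t) = rexp (-t) * (1 - rexp (-(2 * t)))⁻¹ := by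
    have h1 : 1 < rexp t := one_lt_exp_iff.mpr ht
    have h2 : rexp (-(2 * t)) = (rexp t)⁻¹ ^ 2 := by
      rw [← exp_neg, ← exp_nat_mul]
      ring_nf
    rw [sinh_eq, h2, exp_neg]
    have : (rexp t) ^ 2 - 1 ≠ 0 := by nlinarith
    field_simp
  rw [hval]
  refine ((hasSum_geometric_of_lt_one (exp_nonneg _) hq).mul_left (rexp (-t))).congr_fun
    fun n ↦ ?_
  rw [← exp_nat_mul, ← exp_add]
  ring_nf

lemma hasSum_cosh_div_sinh {t : ℝ} (ht : 0 < t) (s : ℝ) :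
    HasSum (Sum.elim (fun n : ℕ ↦ rexp (-((2 * n + 1) * t - s)))
      (fun n : ℕ ↦ rexp (-((2 * n + 1) * t + s)))) (cosh s / sinh t) := by
  have h := hasSum_exp_neg_odd_mul ht
  rw [show cosh s / sinh t = rexp s * (1 / (2 * sinh t)) + rexp (-s) * (1 / (2 * sinh t)) by
    rw [cosh_eq]; ring]
  refine .sum ((h.mul_left (rexp s)).congr_fun fun n ↦ ?_)
    ((h.mul_left (rexp (-s))).congr_fun fun n ↦ ?_) <;>
  · simp only [Function.comp_apply, Sum.elim_inl, Sum.elim_inr, ← exp_add]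
    ring_nf

lemma summable_nat_add_rpow_neg {p q : ℝ} (hp : 1 < p) (hq : 0 ≤ q) :
    Summable fun n : ℕ ↦ ((n : ℝ) + q) ^ (-p) := by
  refine ((summable_one_div_nat_add_rpow q p).mpr hp).congr fun n ↦ ?_
  have : 0 ≤ (n : ℝ) + q := by positivity
  rw [abs_of_nonneg this, rpow_neg this, one_div]

lemma hasSum_mul_nat_add_rpow_neg {p r c : ℝ} (hp : 1 < p) (hr : 0 < r) (hc : 0 ≤ c) :
    HasSum (fun n : ℕ ↦ (r * n + c) ^ (-p))
      ((∑' n : ℕ, ((n : ℝ) + c / r) ^ (-p)) / r ^ p) := by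
  refine ((summable_nat_add_rpow_neg hp (by positivity : 0 ≤ c / r)).hasSum.div_const
    (r ^ p)).congr_fun fun n ↦ ?_
  rw [show r * n + c = r * (n + c / r) by field_simp, mul_rpow hr.le (by positivity),
    rpow_neg hr.le, mul_comm, ← div_eq_mul_inv]

theorem stmt_0 (p a b : ℝ) (hp : 1 < p) (ha : 0 < a) (hb : |b| < a) :
    ∫ x in Set.Ioi (0:ℝ), (Real.cosh (b * x) / Real.sinh (a * x)) * x ^ (p - 1) =
      (Real.Gamma p / (2 * a) ^ p) *
        ((∑' n : ℕ, ((n : ℝ) + (a - b) / (2 * a)) ^ (-p)) +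
         (∑' n : ℕ, ((n : ℝ) + (a + b) / (2 * a)) ^ (-p))) := by
  obtain ⟨hb₁, hb₂⟩ := abs_lt.mp hb
  have h2a : 0 < 2 * a := by positivity
  let r : ℕ ⊕ ℕ → ℝ :=
    Sum.elim (fun n ↦ 2 * a * n + (a - b)) (fun n ↦ 2 * a * n + (a + b))
  have hr : ∀ i, 0 < r i := by
    rintro (n | n) <;> simp only [r, Sum.elim_inl, Sum.elim_inr] <;>
      exact add_pos_of_nonneg_of_pos (by positivity) (by linarith)
  have hseries : HasSum (fun i ↦ r i ^ (-p)) _ :=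
    (hasSum_mul_nat_add_rpow_neg hp h2a (by linarith : 0 ≤ a - b)).sum
      (hasSum_mul_nat_add_rpow_neg hp h2a (by linarith : 0 ≤ a + b))
  have hexp : ∀ x ∈ Ioi (0 : ℝ),
      HasSum (fun i ↦ rexp (-(r i * x))) (cosh (b * x) / sinh (a * x)) := fun x hx ↦
    (hasSum_cosh_div_sinh (mul_pos ha hx) (b * x)).congr_fun fun i ↦ by
      rcases i with n | n <;> simp only [r, Sum.elim_inl, Sum.elim_inr] <;> ring_nf
  rw [(hasSum_integral_mul_rpow_of_hasSum_exp (by linarith) hr hexp hseries.summable).unique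
    (hseries.mul_left _)]
  ring
end

section
/- For real a > 0 and real b with |b| < a, ∫₀^∞ (cosh(b x)/sinh(a x)) · x dx = (π²/(4a²)) · 1/cos²(π b/(2a)). -/
/-!
Expanding `1 / sinh (a x) = 2 ∑ₙ e^{-(2n+1) a x}` turns the integrand into a series of terms
`x e^{-c x}` with `c = (2n+1) a ± b`, each integrating to `1 / c²`; the terms are nonnegative, so
the series may be integrated termwise. Writing `(2n+1) a ± b = 2a (n + x₀)`, `2a (n + 1 - x₀)` with
`x₀ = (a + b) / (2a) ∈ (0, 1)`, the resulting sum is `(4a²)⁻¹ ∑_{k ∈ ℤ} (x₀ - k)⁻²`, and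
`∑_{k ∈ ℤ} (x - k)⁻² = π² / sin² (π x)` is Parseval's identity for `t ↦ e^{2π i x t}` on `[0, 1]`,
whose Fourier coefficients are `(e^{2π i x} - 1) / (2π i (x - k))`.
-/

open Real MeasureTheory

lemma integrableOn_Ioi_mul_exp_neg_mul {c : ℝ} (hc : 0 < c) :
    IntegrableOn (fun x : ℝ => x * exp (-(c * x))) (Set.Ioi 0) := by
  simpa [rpow_one, neg_mul] using
    integrableOn_rpow_mul_exp_neg_mul_rpow (p := 1) (s := 1) (by norm_num) one_pos hc

lemma integral_Ioi_mul_exp_neg_mul {c : ℝ} (hc : 0 < c) :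
    ∫ x in Set.Ioi (0:ℝ), x * exp (-(c * x)) = 1 / c ^ 2 := by
  simpa [Gamma_two, neg_mul, show (2 : ℝ) - 1 = 1 by norm_num] using
    integral_rpow_mul_exp_neg_mul_Ioi (a := 2) (r := c) (by norm_num) hc

lemma integral_eq_of_hasSum_of_nonneg {α ι : Type*} [MeasurableSpace α] [Countable ι]
    {μ : Measure α} {f : ι → α → ℝ} {g : α → ℝ} {I : ℝ}
    (hf : ∀ i, Integrable (f i) μ) (hf₀ : ∀ i, 0 ≤ᵐ[μ] f i)
    (hfg : ∀ᵐ x ∂μ, HasSum (fun i => f i x) (g x)) (hI : HasSum (fun i => ∫ x, f i x ∂μ) I) :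
    ∫ x, g x ∂μ = I := by
  have hnorm : ∀ i, ∫ x, ‖f i x‖ ∂μ = ∫ x, f i x ∂μ := fun i =>
    integral_congr_ae <| (hf₀ i).mono fun x hx => Real.norm_of_nonneg hx
  rw [← hI.tsum_eq, integral_tsum_of_summable_integral_norm hf
    (by simp only [hnorm]; exact hI.summable)]
  exact integral_congr_ae <| hfg.mono fun x hx => hx.tsum_eq.symm

lemma hasSum_cosh_div_sinh_s1 {u : ℝ} (hu : 0 < u) (v : ℝ) :
    HasSum (fun n : ℕ => exp (-((2 * n + 1) * u - v)) + exp (-((2 * n + 1) * u + v)))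
      (cosh v / sinh u) := by
  have hq : exp (-(2 * u)) < 1 := exp_lt_one_iff.mpr (by linarith)
  have hsum : cosh v / sinh u = (exp (v - u) + exp (-v - u)) * (1 - exp (-(2 * u)))⁻¹ := by
    have hE : 1 < exp u := one_lt_exp_iff.mpr hu
    have hE' : exp u * exp u - 1 ≠ 0 := by nlinarith
    rw [cosh_eq, sinh_eq, two_mul]
    simp only [exp_sub, exp_neg, exp_add]
    field_simp
  rw [hsum]
  refine ((hasSum_geometric_of_lt_one (exp_pos _).le hq).mul_left _).congr_fun fun n => ?_
  rw [← exp_nat_mul, add_mul (exp _), ← exp_add, ← exp_add]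
  ring_nf

open Complex in
lemma fourierCoeffOn_exp_mul_I {x : ℝ} {n : ℤ} (hxn : x ≠ n) :
    fourierCoeffOn zero_lt_one (fun t : ℝ => cexp (2 * π * x * t * I)) n
      = (cexp (2 * π * x * I) - 1) / (2 * π * (x - n) * I) := by
  have hc : 2 * π * ((x : ℂ) - n) * I ≠ 0 := by
    have : (x : ℂ) - n ≠ 0 := by exact_mod_cast sub_ne_zero.mpr hxn
    simp [this, pi_ne_zero]
  rw [fourierCoeffOn_eq_integral]
  simp_rw [fourier_coe_apply, smul_eq_mul, ← Complex.exp_add]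
  have : ∀ t : ℝ, 2 * π * I * (-n : ℤ) * t / (1 - 0 : ℝ) + 2 * π * x * t * I
      = 2 * π * (x - n) * I * t := fun t => by push_cast; ring
  simp_rw [this, integral_exp_mul_complex hc]
  have hper : cexp (2 * π * (x - n) * I) = cexp (2 * π * x * I) := by
    rw [show 2 * π * (x - n) * I = 2 * π * x * I + (-n : ℤ) * (2 * π * I) by
      push_cast; ring, Complex.exp_add, exp_int_mul_two_pi_mul_I, mul_one]
  simp [hper]

open Complex in
lemma norm_sq_fourierCoeffOn_exp_mul_I {x : ℝ} {n : ℤ} (hxn : x ≠ n) :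
    ‖fourierCoeffOn zero_lt_one (fun t : ℝ => cexp (2 * π * x * t * I)) n‖ ^ 2
      = Real.sin (π * x) ^ 2 / π ^ 2 * (1 / (x - n) ^ 2) := by
  have hnum : ‖cexp (2 * π * x * I) - 1‖ = ‖2 * Real.sin (π * x)‖ := by
    rw [show 2 * π * x * I = I * (2 * π * x : ℝ) by push_cast; ring,
      norm_exp_I_mul_ofReal_sub_one]
    ring_nf
  have hden : ‖2 * π * ((x : ℂ) - n) * I‖ = ‖2 * π * (x - n)‖ := by
    rw [norm_mul, Complex.norm_I, mul_one, ← Complex.norm_real]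
    push_cast; rfl
  have hxn' : x - n ≠ 0 := sub_ne_zero.mpr hxn
  rw [fourierCoeffOn_exp_mul_I hxn, norm_div, hnum, hden, div_pow, Real.norm_eq_abs,
    Real.norm_eq_abs, sq_abs, sq_abs]
  field_simp

open Complex in
lemma hasSum_one_div_sub_int_sq {x : ℝ} (hx : ∀ n : ℤ, x ≠ n) :
    HasSum (fun n : ℤ => 1 / (x - n) ^ 2) (π ^ 2 / Real.sin (π * x) ^ 2) := by
  have hg : ∀ t : ℝ, ‖cexp (2 * π * x * t * I)‖ = 1 := fun t => by
    rw [show 2 * π * x * t * I = (2 * π * x * t : ℝ) * I by push_cast; ring,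
      norm_exp_ofReal_mul_I]
  have hL2 : MemLp (fun t : ℝ => cexp (2 * π * x * t * I)) 2 (volume.restrict (Set.Ioc 0 1)) :=
    MemLp.of_bound (by fun_prop) 1 (ae_of_all _ fun t => (hg t).le)
  have hparseval := hasSum_sq_fourierCoeffOn zero_lt_one hL2
  simp only [fun n : ℤ => norm_sq_fourierCoeffOn_exp_mul_I (hx n), hg] at hparseval
  have hsin : Real.sin (π * x) ≠ 0 := fun h => by
    obtain ⟨n, hn⟩ := Real.sin_eq_zero_iff.mp h
    exact hx n (by nlinarith [pi_pos])
  have hnorm : ((1 : ℝ) - 0)⁻¹ • ∫ _ in (0 : ℝ)..1, (1 : ℝ) ^ 2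
      = Real.sin (π * x) ^ 2 / π ^ 2 * (π ^ 2 / Real.sin (π * x) ^ 2) := by
    simp [field]
  rw [hnorm] at hparseval
  exact (hasSum_mul_left_iff (by positivity)).mp hparseval

lemma hasSum_one_div_nat_add_sq_add_one_div_nat_add_one_sub_sq {x : ℝ} (hx : ∀ n : ℤ, x ≠ n) :
    HasSum (fun n : ℕ => 1 / (n + x) ^ 2 + 1 / (n + 1 - x) ^ 2) (π ^ 2 / sin (π * x) ^ 2) := by
  have hneg : ∀ n : ℤ, -x ≠ n := fun n h => hx (-n) (by push_cast; linarith)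
  have h := (hasSum_one_div_sub_int_sq hneg).nat_add_neg_add_one
  rw [mul_neg, sin_neg, neg_sq] at h
  refine h.congr_fun fun n => ?_
  push_cast
  ring

lemma hasSum_one_div_odd_mul_sub_sq_add_one_div_odd_mul_add_sq {a b : ℝ} (ha : 0 < a)
    (hb : |b| < a) :
    HasSum (fun n : ℕ => 1 / ((2 * n + 1) * a - b) ^ 2 + 1 / ((2 * n + 1) * a + b) ^ 2)
      (π ^ 2 / (4 * a ^ 2 * cos (π * b / (2 * a)) ^ 2)) := by
  obtain ⟨hba, hab⟩ := abs_lt.mp hb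
  -- `(2n + 1)a + b = 2a(n + x₀)` and `(2n + 1)a - b = 2a(n + 1 - x₀)`
  set x₀ := (a + b) / (2 * a) with hx₀
  have hx₀0 : 0 < x₀ := div_pos (by linarith) (by positivity)
  have hx₀1 : x₀ < 1 := (div_lt_one (by positivity)).mpr (by linarith)
  have hx₀Z : ∀ n : ℤ, x₀ ≠ n := fun n h => by
    rw [h] at hx₀0 hx₀1
    have : (0 : ℤ) < n ∧ n < 1 := ⟨by exact_mod_cast hx₀0, by exact_mod_cast hx₀1⟩
    omega
  have hsin : sin (π * x₀) = cos (π * b / (2 * a)) := by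
    rw [show π * x₀ = π * b / (2 * a) + π / 2 by rw [hx₀]; field_simp; ring, sin_add_pi_div_two]
  rw [← hsin, show π ^ 2 / (4 * a ^ 2 * sin (π * x₀) ^ 2)
    = 1 / (4 * a ^ 2) * (π ^ 2 / sin (π * x₀) ^ 2) by field_simp]
  refine ((hasSum_one_div_nat_add_sq_add_one_div_nat_add_one_sub_sq hx₀Z).mul_left _).congr_fun
    fun n => ?_
  rw [hx₀]
  field_simp
  ring

theorem stmt_1 (a b : ℝ) (ha : 0 < a) (hb : |b| < a) :
    ∫ x in Set.Ioi (0:ℝ), (Real.cosh (b * x) / Real.sinh (a * x)) * x =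
      (π ^ 2 / (4 * a ^ 2)) * (1 / Real.cos (π * b / (2 * a)) ^ 2) := by
  obtain ⟨hba, hab⟩ := abs_lt.mp hb
  have hc : ∀ n : ℕ, 0 < (2 * n + 1) * a - b ∧ 0 < (2 * n + 1) * a + b := fun n => by
    constructor <;> nlinarith [n.cast_nonneg (α := ℝ)]
  set f : ℕ → ℝ → ℝ := fun n x =>
    x * exp (-(((2 * n + 1) * a - b) * x)) + x * exp (-(((2 * n + 1) * a + b) * x))
  have hf : ∀ n, IntegrableOn (f n) (Set.Ioi 0) := fun n =>
    (integrableOn_Ioi_mul_exp_neg_mul (hc n).1).add (integrableOn_Ioi_mul_exp_neg_mul (hc n).2)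
  have hseries : ∀ x ∈ Set.Ioi (0:ℝ), HasSum (fun n => f n x) (cosh (b * x) / sinh (a * x) * x) :=
    fun x hx => ((hasSum_cosh_div_sinh_s1 (mul_pos ha hx) (b * x)).mul_right x).congr_fun fun n => by
      simp only [f]
      ring_nf
  have hint : ∀ n, ∫ x in Set.Ioi 0, f n x
      = 1 / ((2 * n + 1) * a - b) ^ 2 + 1 / ((2 * n + 1) * a + b) ^ 2 := fun n => by
    rw [integral_add (integrableOn_Ioi_mul_exp_neg_mul (hc n).1)
      (integrableOn_Ioi_mul_exp_neg_mul (hc n).2), integral_Ioi_mul_exp_neg_mul (hc n).1,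
      integral_Ioi_mul_exp_neg_mul (hc n).2]
  rw [integral_eq_of_hasSum_of_nonneg hf
    (fun n => ae_restrict_of_forall_mem measurableSet_Ioi fun x (hx : 0 < x) => by
      simp only [f, Pi.zero_apply]; positivity)
    (ae_restrict_of_forall_mem measurableSet_Ioi hseries)
    ((hasSum_one_div_odd_mul_sub_sq_add_one_div_odd_mul_add_sq ha hb).congr_fun hint)]
  field_simp
end

section
/- For real a > 0 and real b with |Im b| interpreted as 0 (b real), ∫₀^∞ e^{-a x} · sin(b x)/x dx = arctan(b/a). -/
open Real MeasureTheory Set Filter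

/-! Differentiate under the integral sign in `b`: the derivative of the left side is
`∫ e^{-ax} cos(bx) dx = a / (a² + b²)`, which is also the derivative of `arctan (b / a)`,
and both sides vanish at `b = 0`. -/

lemma integral_exp_neg_mul_mul_cos_Ioi {a : ℝ} (ha : 0 < a) (b : ℝ) :
    ∫ x in Ioi (0 : ℝ), exp (-a * x) * cos (b * x) = a / (a ^ 2 + b ^ 2) := by
  set z : ℂ := -a + b * Complex.I
  have hz : z.re < 0 := by simpa [z] using ha
  have hre : ∀ x : ℝ, exp (-a * x) * cos (b * x) = RCLike.re (Complex.exp (z * x)) := by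
    intro x
    simp [z, Complex.exp_re]
  simp_rw [hre]
  rw [integral_re (integrableOn_exp_mul_complex_Ioi hz 0), integral_exp_mul_complex_Ioi hz 0]
  simp [z, Complex.div_re, Complex.normSq_apply, sq]

lemma abs_sin_mul_div_le (c x : ℝ) : |sin (c * x) / x| ≤ |c| := by
  rcases eq_or_ne x 0 with rfl | hx
  · simp
  rw [abs_div, div_le_iff₀ (abs_pos.mpr hx), ← abs_mul]
  exact abs_sin_le_abs

lemma hasDerivAt_sin_mul_div {x : ℝ} (hx : x ≠ 0) (c : ℝ) :
    HasDerivAt (fun c => sin (c * x) / x) (cos (c * x)) c := by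
  simpa [hx] using (((hasDerivAt_id c).mul_const x).sin).div_const x

lemma integrableOn_exp_neg_mul_mul_sin_mul_div {a : ℝ} (ha : 0 < a) (c t : ℝ) :
    IntegrableOn (fun x => exp (-a * x) * (sin (c * x) / x)) (Ioi t) := by
  refine ((exp_neg_integrableOn_Ioi t ha).const_mul |c|).mono' (by fun_prop) ?_
  refine .of_forall fun x => ?_
  rw [norm_mul, norm_of_nonneg (exp_pos _).le, mul_comm |c|, norm_eq_abs]
  exact mul_le_mul_of_nonneg_left (abs_sin_mul_div_le c x) (exp_pos _).le

lemma hasDerivAt_integral_exp_neg_mul_mul_sin_mul_div {a : ℝ} (ha : 0 < a) (c : ℝ) :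
    HasDerivAt (fun c => ∫ x in Ioi (0 : ℝ), exp (-a * x) * (sin (c * x) / x))
      (a / (a ^ 2 + c ^ 2)) c := by
  have hbound : ∀ y x : ℝ, ‖exp (-a * x) * cos (y * x)‖ ≤ exp (-a * x) := fun y x => by
    rw [norm_mul, norm_of_nonneg (exp_pos _).le, norm_eq_abs]
    exact mul_le_of_le_one_right (exp_pos _).le (abs_cos_le_one _)
  obtain ⟨-, h⟩ := hasDerivAt_integral_of_dominated_loc_of_deriv_le
    (μ := volume.restrict (Ioi 0)) (F := fun y x => exp (-a * x) * (sin (y * x) / x)) (x₀ := c)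
    (F' := fun y x => exp (-a * x) * cos (y * x)) univ_mem
    (.of_forall fun _ => by fun_prop) (integrableOn_exp_neg_mul_mul_sin_mul_div ha c 0)
    (by fun_prop) (.of_forall fun x y _ => hbound y x) (exp_neg_integrableOn_Ioi 0 ha)
    ((ae_restrict_mem measurableSet_Ioi).mono fun x hx y _ =>
      (hasDerivAt_sin_mul_div (ne_of_gt hx) y).const_mul _)
  rwa [integral_exp_neg_mul_mul_cos_Ioi ha] at h

lemma hasDerivAt_arctan_div {a : ℝ} (ha : a ≠ 0) (c : ℝ) :
    HasDerivAt (fun c => arctan (c / a)) (a / (a ^ 2 + c ^ 2)) c := by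
  refine ((hasDerivAt_id' c).div_const a).arctan.congr_deriv ?_
  field_simp

theorem stmt_3 (a b : ℝ) (ha : 0 < a) :
    ∫ x in Set.Ioi (0:ℝ), Real.exp (-a * x) * (Real.sin (b * x) / x) =
      Real.arctan (b / a) := by
  have hF := hasDerivAt_integral_exp_neg_mul_mul_sin_mul_div ha
  have hA := hasDerivAt_arctan_div ha.ne'
  exact congrFun (eq_of_fderiv_eq (fun c => (hF c).differentiableAt)
    (fun c => (hA c).differentiableAt)
    (fun c => by rw [(hF c).hasFDerivAt.fderiv, (hA c).hasFDerivAt.fderiv]) 0 (by simp)) b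
end

section
/- For real a and real β > 0, ∫₀^∞ (sin(a x)/cosh(β x)) · dx/x = 2·arctan(e^{π a/(2β)}) − π/2. -/
/-!
Rescaling reduces the claim to `β = 1`. Writing `sin (a x) / x = ∫₀^a cos (t x) dt` and exchanging
the integrals turns it into `∫₀^a ∫₀^∞ cos (t x) / cosh x dx dt`. The inner integral is half the
Fourier transform of `sech`, `π / (2 cosh (π t / 2))`, whose antiderivative in `t` is
`2 arctan (exp (π t / 2))`. The Fourier transform itself is the beta integral
`B(s, 1 - s) = Γ(s) Γ(1 - s) = π / sin (π s)` at `s = 1/2 + i t / 2`, after the logistic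
substitution `u = σ(2x)` on `(0, 1)`, which turns `u^(s-1) (1-u)^(-s) du` into
`2 e^{2sx} / (1 + e^{2x}) dx = e^{itx} / cosh x dx`.
-/

open Real MeasureTheory Set

lemma Complex.ofReal_exp_cpow (r : ℝ) (w : ℂ) : ((rexp r : ℝ) : ℂ) ^ w = Complex.exp (r * w) := by
  rw [Complex.cpow_def_of_ne_zero (by exact_mod_cast (exp_pos r).ne'),
    ← Complex.ofReal_log (exp_pos r).le, Real.log_exp]

lemma Complex.betaIntegral_one_sub {s : ℂ} (hs₀ : 0 < s.re) (hs₁ : s.re < 1) :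
    Complex.betaIntegral s (1 - s) = π / Complex.sin (π * s) := by
  have h := Complex.Gamma_mul_Gamma_eq_betaIntegral hs₀ (t := 1 - s) (by simpa using hs₁)
  rwa [add_sub_cancel, Complex.Gamma_one, one_mul, Complex.Gamma_mul_Gamma_one_sub, eq_comm] at h

lemma integral_cexp_mul_div_one_add_exp {s : ℂ} (hs₀ : 0 < s.re) (hs₁ : s.re < 1) :
    ∫ y : ℝ, Complex.exp (s * y) / (1 + rexp y) = π / Complex.sin (π * s) := by
  rw [← Complex.betaIntegral_one_sub hs₀ hs₁, Complex.betaIntegral,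
    intervalIntegral.integral_of_le zero_le_one, integral_Ioc_eq_integral_Ioo, ← range_sigmoid,
    ← image_univ, integral_image_eq_integral_abs_deriv_smul MeasurableSet.univ
      (fun y _ ↦ (hasDerivAt_sigmoid y).hasDerivWithinAt) sigmoid_injective.injOn,
    setIntegral_univ]
  congr 1 with y
  obtain ⟨L, hL⟩ : ∃ L, sigmoid y = rexp L := ⟨_, (exp_log (sigmoid_pos y)).symm⟩
  -- `1 - σ(y) = σ(-y) = σ(y) e^{-y} = (1 + e^y)⁻¹`
  have h₁ : 1 - sigmoid y = rexp (L - y) := by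
    rw [← sigmoid_neg, ← sigmoid_mul_rexp_neg, hL, exp_sub, div_eq_mul_inv, exp_neg]
  have h₂ : (1 : ℂ) + (rexp y : ℝ) = ((rexp (L - y))⁻¹ : ℝ) := by
    rw [← h₁, ← sigmoid_neg, sigmoid_def, neg_neg, inv_inv]; push_cast; rfl
  have h₃ : (1 : ℂ) - (sigmoid y : ℝ) = (rexp (L - y) : ℝ) := by rw [← h₁]; push_cast; rfl
  rw [h₂, h₃, h₁, hL, Complex.ofReal_exp_cpow, Complex.ofReal_exp_cpow,
    abs_of_pos (by positivity), Complex.real_smul]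
  push_cast
  rw [div_inv_eq_mul, ← Complex.exp_add, ← Complex.exp_add, ← Complex.exp_add, ← Complex.exp_add]
  congr 1
  ring

lemma integral_cexp_mul_I_div_cosh (t : ℝ) :
    ∫ x : ℝ, Complex.exp (t * x * Complex.I) / cosh x = (π / cosh (π * t / 2) : ℝ) := by
  set s : ℂ := 1 / 2 + t / 2 * Complex.I with hs_def
  have hs : ∀ x : ℝ, Complex.exp (t * x * Complex.I) / cosh x =
      2 * (Complex.exp (s * ↑(2 * x)) / (1 + ↑(rexp (2 * x)))) := by
    intro x
    have hsx : Complex.exp (s * ↑(2 * x)) = Complex.exp x * Complex.exp (t * x * Complex.I) := by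
      rw [← Complex.exp_add, hs_def]; push_cast; congr 1; ring
    have h2x : ((rexp (2 * x) : ℝ) : ℂ) = Complex.exp x * Complex.exp x := by
      rw [← Complex.exp_add]; push_cast; congr 1; ring
    rw [hsx, h2x, Complex.ofReal_cosh, Complex.cosh, Complex.exp_neg]
    field_simp
    ring
  have hsin : Complex.sin (π * s) = (cosh (π * t / 2) : ℝ) := by
    rw [show (π : ℂ) * s = (π * t / 2 : ℝ) * Complex.I + π / 2 by push_cast; ring,
      Complex.sin_add_pi_div_two, Complex.cos_mul_I, Complex.ofReal_cosh]
  simp_rw [hs, integral_const_mul, Measure.integral_comp_mul_left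
      (fun x ↦ Complex.exp (s * x) / (1 + rexp x)),
    integral_cexp_mul_div_one_add_exp (s := s) (by simp [s]) (by norm_num [s]), hsin]
  norm_num [Complex.real_smul]
  ring

lemma inv_cosh_le_two_mul_exp_neg (x : ℝ) : (cosh x)⁻¹ ≤ 2 * rexp (-x) := by
  have h : rexp x * rexp (-x) = 1 := by rw [← exp_add, add_neg_cancel, exp_zero]
  rw [inv_le_iff_one_le_mul₀' (cosh_pos x), cosh_eq]
  nlinarith [sq_nonneg (rexp (-x))]

lemma integrable_inv_cosh : Integrable fun x : ℝ ↦ (cosh x)⁻¹ := by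
  have hmeas : AEStronglyMeasurable (fun x : ℝ ↦ (cosh x)⁻¹) :=
    (continuous_cosh.inv₀ fun x ↦ (cosh_pos x).ne').aestronglyMeasurable
  rw [← integrableOn_univ, ← Iic_union_Ioi (a := 0)]
  refine IntegrableOn.union ?_ ?_
  · refine ((integrableOn_exp_Iic 0).const_mul 2).mono' hmeas.restrict (ae_of_all _ fun x ↦ ?_)
    simpa [abs_of_pos (cosh_pos x)] using inv_cosh_le_two_mul_exp_neg (-x)
  · refine ((exp_neg_integrableOn_Ioi 0 one_pos).const_mul 2).mono' hmeas.restrict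
      (ae_of_all _ fun x ↦ ?_)
    simpa [abs_of_pos (cosh_pos x)] using inv_cosh_le_two_mul_exp_neg x

lemma integral_Ioi_cos_mul_div_cosh (t : ℝ) :
    ∫ x in Ioi 0, cos (t * x) / cosh x = π / (2 * cosh (π * t / 2)) := by
  have hint : Integrable fun x : ℝ ↦ Complex.exp (t * x * Complex.I) / cosh x := by
    refine integrable_inv_cosh.mono' ?_ (ae_of_all _ fun x ↦ ?_)
    · exact ((by fun_prop : Continuous fun x : ℝ ↦ Complex.exp (t * x * Complex.I)).div
        (by fun_prop) fun x ↦ Complex.ofReal_ne_zero.2 (cosh_pos x).ne').aestronglyMeasurable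
    · rw [norm_div, ← Complex.ofReal_mul, Complex.norm_exp_ofReal_mul_I, Complex.norm_real,
        norm_of_nonneg (cosh_pos x).le, one_div]
  have hline : ∫ x, cos (t * x) / cosh x = π / cosh (π * t / 2) := by
    have h := integral_re hint
    rw [integral_cexp_mul_I_div_cosh] at h
    simpa only [RCLike.re_to_complex, Complex.ofReal_re, Complex.div_ofReal_re,
      ← Complex.ofReal_mul, Complex.exp_ofReal_mul_I_re] using h
  have heven : ∀ x, cos (t * |x|) / cosh |x| = cos (t * x) / cosh x := by
    intro x
    rcases abs_choice x with h | h <;> simp [h]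
  have htwice : 2 * ∫ x in Ioi 0, cos (t * x) / cosh x = π / cosh (π * t / 2) := by
    rw [← integral_comp_abs (f := fun x ↦ cos (t * x) / cosh x)]
    simpa only [heven] using hline
  rw [div_mul_eq_div_div_swap, ← htwice]
  ring

lemma hasDerivAt_two_mul_arctan_exp (t : ℝ) :
    HasDerivAt (fun t ↦ 2 * arctan (rexp t)) (cosh t)⁻¹ t := by
  refine ((hasDerivAt_exp t).arctan.const_mul 2).congr_deriv ?_
  rw [cosh_eq, exp_neg]
  field_simp
  ring

lemma intervalIntegral_pi_div_two_mul_cosh (a : ℝ) :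
    ∫ t in 0..a, π / (2 * cosh (π * t / 2)) = 2 * arctan (rexp (π * a / 2)) - π / 2 := by
  have hderiv : ∀ t ∈ uIcc 0 a, HasDerivAt (fun t ↦ 2 * arctan (rexp (π * t / 2)))
      (π / (2 * cosh (π * t / 2))) t := by
    intro t _
    refine ((hasDerivAt_two_mul_arctan_exp _).comp t
      (((hasDerivAt_id' t).const_mul π).div_const 2)).congr_deriv ?_
    field_simp
  have hcont : Continuous fun t ↦ π / (2 * cosh (π * t / 2)) :=
    continuous_const.div (by fun_prop) fun t ↦ by positivity
  rw [intervalIntegral.integral_eq_sub_of_hasDerivAt hderiv (hcont.intervalIntegrable _ _)]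
  norm_num [arctan_one]
  ring

lemma integral_intervalIntegral_swap {α E : Type*} [MeasurableSpace α] {μ : Measure α}
    [SFinite μ] [NormedAddCommGroup E] [NormedSpace ℝ E] {f : α → ℝ → E} {a b : ℝ}
    (hf : Integrable (Function.uncurry f) (μ.prod (volume.restrict (uIoc a b)))) :
    ∫ x, (∫ t in a..b, f x t) ∂μ = ∫ t in a..b, ∫ x, f x t ∂μ := by
  simp only [intervalIntegral.intervalIntegral_eq_integral_uIoc, integral_smul,
    integral_integral_swap hf]

lemma intervalIntegral_cos_mul_right {x : ℝ} (hx : x ≠ 0) (a : ℝ) :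
    ∫ t in 0..a, cos (t * x) = sin (a * x) / x := by
  rw [intervalIntegral.integral_comp_mul_right cos hx, integral_cos, zero_mul, sin_zero,
    sub_zero, smul_eq_mul, inv_mul_eq_div]

lemma integral_Ioi_sin_mul_div_cosh_div (a : ℝ) :
    ∫ x in Ioi 0, sin (a * x) / cosh x / x = 2 * arctan (rexp (π * a / 2)) - π / 2 := by
  have hint : Integrable (Function.uncurry fun x t ↦ cos (t * x) / cosh x)
      ((volume.restrict (Ioi 0)).prod (volume.restrict (uIoc 0 a))) := by
    refine (integrable_inv_cosh.restrict.mul_prod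
      (integrableOn_const (C := (1 : ℝ)) measure_Ioc_lt_top.ne)).mono' ?_ (ae_of_all _ ?_)
    · exact (continuous_cos.comp (continuous_snd.mul continuous_fst)).div
        (continuous_cosh.comp continuous_fst) (fun p ↦ (cosh_pos _).ne') |>.aestronglyMeasurable
    · rintro ⟨x, t⟩
      rw [Function.uncurry_apply_pair, norm_div, norm_of_nonneg (cosh_pos _).le, mul_one,
        div_eq_mul_inv, mul_comm]
      exact mul_le_of_le_one_right (by positivity) (abs_cos_le_one _)
  calc ∫ x in Ioi 0, sin (a * x) / cosh x / x
      = ∫ x in Ioi 0, ∫ t in 0..a, cos (t * x) / cosh x :=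
        setIntegral_congr_fun measurableSet_Ioi fun x hx ↦ by
          rw [intervalIntegral.integral_div, intervalIntegral_cos_mul_right (ne_of_gt hx),
            div_right_comm]
    _ = ∫ t in 0..a, ∫ x in Ioi 0, cos (t * x) / cosh x := integral_intervalIntegral_swap hint
    _ = ∫ t in 0..a, π / (2 * cosh (π * t / 2)) := by simp_rw [integral_Ioi_cos_mul_div_cosh]
    _ = 2 * arctan (rexp (π * a / 2)) - π / 2 := intervalIntegral_pi_div_two_mul_cosh a

theorem stmt_5 (a β : ℝ) (hβ : 0 < β) :
    ∫ x in Set.Ioi (0:ℝ), (Real.sin (a * x) / Real.cosh (β * x)) / x =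
      2 * Real.arctan (Real.exp (π * a / (2 * β))) - π / 2 := by
  calc ∫ x in Ioi 0, sin (a * x) / cosh (β * x) / x
      = β • ∫ x in Ioi 0, sin (a / β * (β * x)) / cosh (β * x) / (β * x) := by
        rw [← integral_smul]
        refine setIntegral_congr_fun measurableSet_Ioi fun x hx ↦ ?_
        have hx₀ : x ≠ 0 := ne_of_gt hx
        rw [smul_eq_mul]
        field_simp
    _ = ∫ y in Ioi 0, sin (a / β * y) / cosh y / y := by
        rw [integral_comp_mul_left_Ioi' (fun y ↦ sin (a / β * y) / cosh y / y) 0 hβ, mul_zero]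
    _ = 2 * arctan (rexp (π * a / (2 * β))) - π / 2 := by
        rw [integral_Ioi_sin_mul_div_cosh_div, mul_div_assoc', div_div, mul_comm β]
end

section
/- For real p and real q > 0, ∫₀^∞ (1 − cos(p x))/(x · sinh(q x)) dx = ln cosh(p π/(2q)). -/
/-!
Since `1 / sinh y = 2 ∑ₖ exp (-(2k+1) y)`, the integral is `∑ₖ 2 Iₖ` with
`Iₖ = ∫₀^∞ (1 - cos px) e^{-aₖ x} / x dx` and `aₖ = (2k+1) q`. Writing `(1 - cos px) / x` as
`∫₀^p sin(tx) dt` and swapping the integrals gives `Iₖ = ½ log (1 + p² / aₖ²)` from the Laplace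
transform `∫₀^∞ e^{-ax} sin(tx) dx = t / (a² + t²)`. Finally
`∑ₖ log (1 + x² / (2k+1)²) = log cosh (πx/2)`: by Euler's product at an imaginary argument the sum
over all `j ≥ 1` of `log (1 + x² / j²)` is `log (sinh πx / πx)`, the even `j` contribute the same
series at `x/2`, and `sinh πx = 2 sinh (πx/2) cosh (πx/2)`.
-/

open Real MeasureTheory Set Filter Topology

theorem integral_exp_neg_mul_sin_mul {a : ℝ} (ha : 0 < a) (t : ℝ) :
    ∫ x in Ioi (0 : ℝ), exp (-a * x) * sin (t * x) = t / (a ^ 2 + t ^ 2) := by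
  have hre : (-a + t * Complex.I).re < 0 := by simpa using ha
  have him (x : ℝ) : exp (-a * x) * sin (t * x) =
      RCLike.im (Complex.exp ((-a + t * Complex.I) * x)) := by
    simp [Complex.exp_im]
  simp_rw [him]
  rw [integral_im (integrableOn_exp_mul_complex_Ioi hre 0), integral_exp_mul_complex_Ioi hre 0]
  simp [Complex.div_im, Complex.normSq_apply]
  field_simp

theorem integral_Ioc_sin_mul {x : ℝ} (hx : x ≠ 0) {p : ℝ} (hp : 0 ≤ p) :
    ∫ t in Ioc 0 p, sin (t * x) = (1 - cos (p * x)) / x := by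
  rw [← intervalIntegral.integral_of_le hp, intervalIntegral.integral_comp_mul_right _ hx,
    integral_sin]
  simp [div_eq_inv_mul]

theorem integral_Ioc_div_sq_add_sq {a : ℝ} (ha : a ≠ 0) {p : ℝ} (hp : 0 ≤ p) :
    ∫ t in Ioc 0 p, t / (a ^ 2 + t ^ 2) = log (1 + p ^ 2 / a ^ 2) / 2 := by
  have hderiv : ∀ t ∈ uIcc 0 p,
      HasDerivAt (fun t => log (1 + t ^ 2 / a ^ 2) / 2) (t / (a ^ 2 + t ^ 2)) t := by
    intro t _
    have hpos : 0 < 1 + t ^ 2 / a ^ 2 := by positivity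
    refine ((((hasDerivAt_pow 2 t).div_const (a ^ 2)).const_add 1).log hpos.ne').div_const 2
      |>.congr_deriv ?_
    field_simp
    ring
  rw [← intervalIntegral.integral_of_le hp, intervalIntegral.integral_eq_sub_of_hasDerivAt hderiv]
  · simp
  · exact (continuous_id.div (by fun_prop) fun t => by positivity).intervalIntegrable _ _

theorem integrable_exp_neg_mul_sin_mul_prod {a : ℝ} (ha : 0 < a) (p : ℝ) :
    Integrable (fun z : ℝ × ℝ => exp (-a * z.2) * sin (z.1 * z.2))
      ((volume.restrict (Ioc 0 p)).prod (volume.restrict (Ioi 0))) := by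
  refine Integrable.mono' (g := fun z : ℝ × ℝ => 1 * exp (-a * z.2)) ?_ (by fun_prop) ?_
  · exact (integrable_const (μ := volume.restrict (Ioc 0 p)) 1).mul_prod
      (exp_neg_integrableOn_Ioi 0 ha)
  · refine .of_forall fun z => ?_
    rw [norm_mul, norm_of_nonneg (exp_pos _).le, mul_comm]
    gcongr
    exact abs_sin_le_one _

theorem one_sub_cos_mul_exp_div_eq_integral {a x : ℝ} (hx : x ≠ 0) {p : ℝ} (hp : 0 ≤ p) :
    (1 - cos (p * x)) * exp (-a * x) / x = ∫ t in Ioc 0 p, exp (-a * x) * sin (t * x) := by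
  rw [integral_const_mul, integral_Ioc_sin_mul hx hp]
  ring

theorem integrableOn_one_sub_cos_mul_exp_div {a : ℝ} (ha : 0 < a) {p : ℝ} (hp : 0 ≤ p) :
    IntegrableOn (fun x => (1 - cos (p * x)) * exp (-a * x) / x) (Ioi 0) := by
  refine (integrable_exp_neg_mul_sin_mul_prod ha p).integral_prod_right.congr ?_
  filter_upwards [self_mem_ae_restrict measurableSet_Ioi] with x hx
  exact (one_sub_cos_mul_exp_div_eq_integral (ne_of_gt hx) hp).symm

theorem integral_one_sub_cos_mul_exp_div {a : ℝ} (ha : 0 < a) {p : ℝ} (hp : 0 ≤ p) :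
    ∫ x in Ioi 0, (1 - cos (p * x)) * exp (-a * x) / x = log (1 + p ^ 2 / a ^ 2) / 2 := by
  calc ∫ x in Ioi 0, (1 - cos (p * x)) * exp (-a * x) / x
      = ∫ x in Ioi 0, ∫ t in Ioc 0 p, exp (-a * x) * sin (t * x) :=
        setIntegral_congr_fun measurableSet_Ioi fun x hx =>
          one_sub_cos_mul_exp_div_eq_integral (ne_of_gt hx) hp
    _ = ∫ t in Ioc 0 p, ∫ x in Ioi 0, exp (-a * x) * sin (t * x) :=
        (integral_integral_swap (integrable_exp_neg_mul_sin_mul_prod ha p)).symm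
    _ = ∫ t in Ioc 0 p, t / (a ^ 2 + t ^ 2) := by
        simp_rw [integral_exp_neg_mul_sin_mul ha]
    _ = log (1 + p ^ 2 / a ^ 2) / 2 := integral_Ioc_div_sq_add_sq ha.ne' hp

theorem hasSum_two_mul_exp_neg_odd_mul {y : ℝ} (hy : 0 < y) :
    HasSum (fun k : ℕ => 2 * exp (-((2 * k + 1) * y))) (sinh y)⁻¹ := by
  have hr : exp (-(2 * y)) < 1 := exp_lt_one_iff.mpr (by linarith)
  have hterm (k : ℕ) : 2 * exp (-((2 * k + 1) * y)) = 2 * exp (-y) * exp (-(2 * y)) ^ k := by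
    rw [mul_assoc, ← exp_nat_mul, ← exp_add]
    ring_nf
  have hsum : (sinh y)⁻¹ = 2 * exp (-y) * (1 - exp (-(2 * y)))⁻¹ := by
    have : exp (-(2 * y)) = exp (-y) ^ 2 := by rw [← exp_nat_mul]; ring_nf
    rw [sinh_eq, this, exp_neg]
    have := exp_pos y
    field_simp
  rw [funext hterm, hsum]
  exact (hasSum_geometric_of_lt_one (exp_pos _).le hr).mul_left _

theorem Real.tendsto_euler_sinh_prod (x : ℝ) :
    Tendsto (fun n : ℕ => π * x * ∏ j ∈ Finset.range n, (1 + x ^ 2 / ((j : ℝ) + 1) ^ 2))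
      atTop (𝓝 (sinh (π * x))) := by
  convert (Complex.continuous_im.tendsto _).comp
    (Complex.tendsto_euler_sin_prod (x * Complex.I)) using 1
  · ext n
    have : ∏ j ∈ Finset.range n, (1 - (x * Complex.I) ^ 2 / ((j : ℂ) + 1) ^ 2) =
        ((∏ j ∈ Finset.range n, (1 + x ^ 2 / ((j : ℝ) + 1) ^ 2) : ℝ) : ℂ) := by
      push_cast
      simp [mul_pow, neg_div]
    rw [Function.comp_apply, this, ← mul_assoc, mul_right_comm ((π : ℂ) * x) Complex.I,
      ← Complex.ofReal_mul, ← Complex.ofReal_mul, Complex.mul_I_im, Complex.ofReal_re]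
  · rw [← mul_assoc, ← Complex.ofReal_mul, Complex.sin_mul_I, ← Complex.ofReal_sinh,
      Complex.mul_I_im, Complex.ofReal_re]

theorem sinh_div_self_pos {y : ℝ} (hy : y ≠ 0) : 0 < sinh y / y := by
  rcases hy.lt_or_gt with hy | hy
  · exact div_pos_of_neg_of_neg (sinh_neg_iff.mpr hy) hy
  · exact div_pos (sinh_pos_iff.mpr hy) hy

theorem hasSum_log_one_add_sq_div_sq {x : ℝ} (hx : x ≠ 0) :
    HasSum (fun j : ℕ => log (1 + x ^ 2 / ((j : ℝ) + 1) ^ 2))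
      (log (sinh (π * x) / (π * x))) := by
  have hπx : π * x ≠ 0 := mul_ne_zero pi_ne_zero hx
  have hprod : Tendsto (fun n : ℕ => ∏ j ∈ Finset.range n, (1 + x ^ 2 / ((j : ℝ) + 1) ^ 2))
      atTop (𝓝 (sinh (π * x) / (π * x))) :=
    ((tendsto_euler_sinh_prod x).div_const (π * x)).congr fun n => by field_simp
  rw [hasSum_iff_tendsto_nat_of_nonneg fun j => log_nonneg (le_add_of_nonneg_right (by positivity))]
  exact ((continuousAt_log (sinh_div_self_pos hπx).ne').tendsto.comp hprod).congr fun n =>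
    log_prod fun j _ => (by positivity : (0 : ℝ) < 1 + x ^ 2 / ((j : ℝ) + 1) ^ 2).ne'

theorem hasSum_log_one_add_sq_div_odd_sq (x : ℝ) :
    HasSum (fun k : ℕ => log (1 + x ^ 2 / (2 * (k : ℝ) + 1) ^ 2))
      (log (cosh (π * x / 2))) := by
  rcases eq_or_ne x 0 with rfl | hx
  · simp [hasSum_zero]
  set f : ℕ → ℝ := fun j => log (1 + x ^ 2 / ((j : ℝ) + 1) ^ 2)
  have hx2 : x / 2 ≠ 0 := div_ne_zero hx two_ne_zero
  have hall : HasSum f (log (sinh (π * x) / (π * x))) := hasSum_log_one_add_sq_div_sq hx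
  have hodd : HasSum (fun k => f (2 * k + 1)) (log (sinh (π * (x / 2)) / (π * (x / 2)))) := by
    convert hasSum_log_one_add_sq_div_sq hx2 using 3 with k
    push_cast
    rw [show 2 * (k : ℝ) + 1 + 1 = 2 * (k + 1) by ring, div_pow, div_div, mul_pow]
  have heven : HasSum (fun k => f (2 * k)) (∑' k, f (2 * k)) :=
    (hall.summable.comp_injective (mul_right_injective₀ two_ne_zero)).hasSum
  have hsplit := hall.unique (heven.even_add_odd hodd)
  convert heven using 1
  · ext k
    simp [f]
  · have hhalf := sinh_div_self_pos (mul_ne_zero pi_ne_zero hx2)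
    rw [eq_sub_of_add_eq hsplit.symm,
      ← log_div (sinh_div_self_pos (mul_ne_zero pi_ne_zero hx)).ne' hhalf.ne']
    congr 1
    rw [show π * x = 2 * (π * (x / 2)) by ring, sinh_two_mul]
    field_simp

theorem integral_one_sub_cos_div_mul_sinh {p q : ℝ} (hp : 0 ≤ p) (hq : 0 < q) :
    ∫ x in Ioi 0, (1 - cos (p * x)) / (x * sinh (q * x)) = log (cosh (p * π / (2 * q))) := by
  set F : ℕ → ℝ → ℝ := fun k x => 2 * ((1 - cos (p * x)) * exp (-((2 * k + 1) * q) * x) / x)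
  have ha (k : ℕ) : 0 < (2 * k + 1) * q := by positivity
  have hint (k : ℕ) : Integrable (F k) (volume.restrict (Ioi 0)) :=
    (integrableOn_one_sub_cos_mul_exp_div (ha k) hp).const_mul 2
  have hval (k : ℕ) : ∫ x in Ioi 0, F k x = log (1 + (p / q) ^ 2 / (2 * k + 1) ^ 2) := by
    rw [integral_const_mul, integral_one_sub_cos_mul_exp_div (ha k) hp,
      mul_div_cancel₀ _ two_ne_zero, mul_pow, div_pow, div_div, mul_comm (q ^ 2)]
  have hnorm (k : ℕ) : ∫ x in Ioi 0, ‖F k x‖ = ∫ x in Ioi 0, F k x := by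
    refine setIntegral_congr_fun measurableSet_Ioi fun x (hx : 0 < x) => norm_of_nonneg ?_
    have := cos_le_one (p * x)
    have := exp_pos (-((2 * k + 1) * q) * x)
    positivity
  have hsum := hasSum_integral_of_summable_integral_norm hint <| by
    simp_rw [hnorm, hval]
    exact (hasSum_log_one_add_sq_div_odd_sq (p / q)).summable
  have hpt : ∀ x ∈ Ioi (0 : ℝ), ∑' k, F k x = (1 - cos (p * x)) / (x * sinh (q * x)) := by
    intro x (hx : 0 < x)
    calc ∑' k, F k x
        = ∑' k : ℕ, (1 - cos (p * x)) / x * (2 * exp (-((2 * k + 1) * (q * x)))) :=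
          tsum_congr fun k => by simp only [F]; ring_nf
      _ = (1 - cos (p * x)) / x * (sinh (q * x))⁻¹ :=
          ((hasSum_two_mul_exp_neg_odd_mul (mul_pos hq hx)).mul_left _).tsum_eq
      _ = (1 - cos (p * x)) / (x * sinh (q * x)) := by ring
  rw [← setIntegral_congr_fun measurableSet_Ioi hpt]
  refine hsum.unique ?_
  simp_rw [hval]
  rw [show p * π / (2 * q) = π * (p / q) / 2 by ring]
  exact hasSum_log_one_add_sq_div_odd_sq (p / q)

theorem stmt_9 (p q : ℝ) (hq : 0 < q) :
    ∫ x in Set.Ioi (0:ℝ), (1 - Real.cos (p * x)) / (x * Real.sinh (q * x)) =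
      Real.log (Real.cosh (p * π / (2 * q))) := by
  wlog hp : 0 ≤ p generalizing p
  · simpa [neg_mul, neg_div, cos_neg, cosh_neg] using this (-p) (by linarith)
  exact integral_one_sub_cos_div_mul_sinh hp hq
end

section
/- For real a, b and real β > 0, ∫₀^∞ (sin(a x) − sin(b x))/(x · cosh(β x)) dx = 2·arctan( (e^{aπ/(2β)} − e^{bπ/(2β)}) / (1 + e^{(a+b)π/(2β)}) ). -/
/-
Differentiating under the integral sign in `a`, `S(a) = ∫₀^∞ sin(ax) / (x cosh βx) dx` has
derivative `∫₀^∞ cos(ax) / cosh(βx) dx = π / (2β cosh(aπ/(2β)))`, a Fourier transform of sech.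
That transform comes from Euler's reflection formula: the substitution `t = eʸ / (2 cosh y)`
turns `B(p, 1 - p) = Γ(p) Γ(1 - p) = π / sin(πp)` into `∫ e^{(2p-1)y} / cosh y dy`; take
`p = (1 + is)/2`. As `S(0) = 0` and `2 arctan(e^u)` has derivative `sech u`, this gives
`S(a) = 2 arctan(e^{aπ/(2β)}) - π/2`, and the subtraction formula for `arctan` finishes.
-/

open Real MeasureTheory Set
open scoped Complex

theorem Complex.ofReal_exp_cpow_s11 (u : ℝ) (q : ℂ) : (Real.exp u : ℂ) ^ q = cexp (u * q) := by
  rw [cpow_def_of_ne_zero (by exact_mod_cast (exp_pos u).ne'), ← ofReal_log (exp_pos u).le,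
    Real.log_exp]

namespace Real

lemma one_add_sq_div_four_le_cosh (x : ℝ) : 1 + x ^ 2 / 4 ≤ cosh x := by
  wlog hx : 0 ≤ x generalizing x
  · simpa using this (-x) (by linarith)
  have h₁ := quadratic_le_exp_of_nonneg hx
  have h₂ := add_one_le_exp (-x)
  rw [cosh_eq]
  nlinarith

lemma integrable_inv_cosh : Integrable fun x : ℝ => (cosh x)⁻¹ := by
  refine (integrable_inv_one_add_sq.const_mul 4).mono' (by fun_prop) (.of_forall fun x => ?_)
  have hc := one_add_sq_div_four_le_cosh x
  rw [norm_inv, norm_of_nonneg (cosh_pos x).le, ← div_eq_mul_inv,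
    inv_le_comm₀ (cosh_pos x) (by positivity), inv_div]
  linarith

lemma hasDerivAt_exp_div_two_mul_cosh (y : ℝ) :
    HasDerivAt (fun y => exp y / (2 * cosh y)) (1 / (2 * cosh y ^ 2)) y := by
  refine ((hasDerivAt_exp y).div ((hasDerivAt_cosh y).const_mul 2) (by positivity)).congr_deriv ?_
  rw [← mul_sub, ← mul_sub, cosh_sub_sinh, mul_left_comm, ← exp_add, add_neg_cancel, exp_zero]
  field_simp

lemma exp_div_two_mul_cosh_eq (y : ℝ) : exp y / (2 * cosh y) = (1 + tanh y) / 2 := by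
  rw [tanh_eq_sinh_div_cosh, ← cosh_add_sinh]
  field_simp

lemma one_sub_exp_div_two_mul_cosh (y : ℝ) :
    1 - exp y / (2 * cosh y) = exp (-y) / (2 * cosh y) := by
  rw [← cosh_sub_sinh, ← cosh_add_sinh]
  field_simp
  ring

lemma image_exp_div_two_mul_cosh : (fun y => exp y / (2 * cosh y)) '' univ = Ioo 0 1 := by
  simp_rw [exp_div_two_mul_cosh_eq]
  rw [show (fun y => (1 + tanh y) / 2) = (fun t => 2⁻¹ * t + 2⁻¹) ∘ tanh by ext; simp only [Function.comp_apply]; ring,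
    image_comp, tanh_bijOn.image_eq, image_affine_Ioo (by norm_num)]
  norm_num

lemma injective_exp_div_two_mul_cosh : Function.Injective fun y => exp y / (2 * cosh y) := by
  intro y z h
  simp only [exp_div_two_mul_cosh_eq] at h
  exact tanh_injective (by linarith)

lemma cpow_mul_one_sub_cpow_exp_div_two_mul_cosh (p : ℂ) (y : ℝ) :
    ((exp y / (2 * cosh y) : ℝ) : ℂ) ^ (p - 1) *
        (1 - ((exp y / (2 * cosh y) : ℝ) : ℂ)) ^ (-p) =
      2 * cosh y * cexp ((2 * p - 1) * y) := by
  have hc : 0 < 2 * cosh y := by positivity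
  have hx : exp y / (2 * cosh y) = exp (y - log (2 * cosh y)) := by
    rw [exp_sub, exp_log hc]
  have h1x : (1 : ℂ) - ((exp y / (2 * cosh y) : ℝ) : ℂ) =
      ((exp (-y - log (2 * cosh y)) : ℝ) : ℂ) := by
    rw [← Complex.ofReal_one, ← Complex.ofReal_sub, one_sub_exp_div_two_mul_cosh, exp_sub,
      exp_log hc]
  have h2c : (2 * cosh y : ℂ) = cexp (log (2 * cosh y) : ℝ) := by
    rw [← Complex.ofReal_exp, exp_log hc]
    push_cast
    ring
  rw [h1x, hx, Complex.ofReal_exp_cpow_s11, Complex.ofReal_exp_cpow_s11, ← Complex.exp_add, h2c,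
    ← Complex.exp_add]
  congr 1
  push_cast
  ring

lemma betaIntegral_one_sub_eq_integral_exp_div_cosh (p : ℂ) :
    Complex.betaIntegral p (1 - p) = ∫ y : ℝ, cexp ((2 * p - 1) * y) / cosh y := by
  have hsub := integral_image_eq_integral_abs_deriv_smul MeasurableSet.univ
    (fun y _ => (hasDerivAt_exp_div_two_mul_cosh y).hasDerivWithinAt)
    injective_exp_div_two_mul_cosh.injOn (fun x : ℝ => (x : ℂ) ^ (p - 1) * (1 - (x : ℂ)) ^ (-p))
  rw [image_exp_div_two_mul_cosh, Measure.restrict_univ] at hsub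
  rw [Complex.betaIntegral, intervalIntegral.integral_of_le zero_le_one,
    integral_Ioc_eq_integral_Ioo, sub_sub_cancel_left, hsub]
  congr 1 with y
  rw [cpow_mul_one_sub_cpow_exp_div_two_mul_cosh, abs_of_pos (by positivity), Complex.real_smul]
  have := cosh_pos y
  push_cast
  field_simp

lemma integral_exp_mul_div_cosh {p : ℂ} (hp₀ : 0 < p.re) (hp₁ : p.re < 1) :
    ∫ y : ℝ, cexp ((2 * p - 1) * y) / cosh y = π / Complex.sin (π * p) := by
  have hbeta :=
    Complex.Gamma_mul_Gamma_eq_betaIntegral hp₀ (by simpa using hp₁ : 0 < (1 - p).re)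
  rw [add_sub_cancel, Complex.Gamma_one, one_mul, Complex.Gamma_mul_Gamma_one_sub] at hbeta
  rw [← betaIntegral_one_sub_eq_integral_exp_div_cosh, hbeta]

lemma integral_cos_mul_div_cosh (s : ℝ) :
    ∫ y : ℝ, cos (s * y) / cosh y = π / cosh (π * s / 2) := by
  have h := integral_exp_mul_div_cosh (p := (1 + s * Complex.I) / 2) (by simp) (by norm_num)
  have hsin : Complex.sin (π * ((1 + s * Complex.I) / 2)) = cosh (π * s / 2) := by
    rw [show (π : ℂ) * ((1 + s * Complex.I) / 2) = π / 2 + (π * s / 2 : ℝ) * Complex.I by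
      push_cast; ring, Complex.sin_add_mul_I, Complex.sin_pi_div_two, Complex.cos_pi_div_two]
    simp
  rw [hsin, show 2 * ((1 + s * Complex.I) / 2) - 1 = s * Complex.I by ring] at h
  have hexp (y : ℝ) : (s : ℂ) * Complex.I * y = (s * y : ℝ) * Complex.I := by push_cast; ring
  have hint : Integrable fun y : ℝ => cexp (s * Complex.I * y) / cosh y := by
    refine integrable_inv_cosh.mono' (by fun_prop : Measurable _).aestronglyMeasurable
      (.of_forall fun y => ?_)
    rw [norm_div, hexp, Complex.norm_exp_ofReal_mul_I, Complex.norm_real,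
      norm_of_nonneg (cosh_pos y).le, one_div]
  have hre (y : ℝ) : (cexp (s * Complex.I * y) / cosh y).re = cos (s * y) / cosh y := by
    rw [Complex.div_ofReal_re, hexp, Complex.exp_ofReal_mul_I_re]
  calc ∫ y : ℝ, cos (s * y) / cosh y
      = (∫ y : ℝ, cexp (s * Complex.I * y) / cosh y).re := by
        simp_rw [← hre]
        exact integral_re hint
    _ = π / cosh (π * s / 2) := by rw [h, Complex.div_ofReal_re, Complex.ofReal_re]

variable {β : ℝ}

lemma integral_Ioi_cos_mul_div_cosh_mul (hβ : 0 < β) (a : ℝ) :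
    ∫ x in Ioi 0, cos (a * x) / cosh (β * x) = π / (2 * β * cosh (a * π / (2 * β))) := by
  have hscale := Measure.integral_comp_mul_left (fun y => cos (a / β * y) / cosh y) β
  simp only [integral_cos_mul_div_cosh, ← mul_assoc, div_mul_cancel₀ a hβ.ne', smul_eq_mul,
    abs_of_pos (inv_pos.2 hβ)] at hscale
  have heven :
      ∫ x, cos (a * x) / cosh (β * x) = 2 * ∫ x in Ioi 0, cos (a * x) / cosh (β * x) := by
    rw [← integral_comp_abs (f := fun x => cos (a * x) / cosh (β * x))]
    congr 1 with x
    rcases abs_choice x with h | h <;> simp [h]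
  rw [heven, show π * (a / β) / 2 = a * π / (2 * β) by ring] at hscale
  generalize (∫ x in Ioi 0, cos (a * x) / cosh (β * x)) = I at hscale ⊢
  have := cosh_pos (a * π / (2 * β))
  field_simp at hscale ⊢
  linarith

lemma abs_cos_div_cosh_le (u t : ℝ) : |cos u / cosh t| ≤ (cosh t)⁻¹ := by
  rw [abs_div, abs_of_pos (cosh_pos t), div_eq_mul_inv]
  exact mul_le_of_le_one_left (by positivity) (abs_cos_le_one _)

lemma abs_sin_mul_div_mul_cosh_le (a : ℝ) {x : ℝ} (hx : 0 < x) (t : ℝ) :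
    |sin (a * x) / (x * cosh t)| ≤ |a| * (cosh t)⁻¹ := by
  have := cosh_pos t
  rw [abs_div, abs_of_pos (mul_pos hx this), div_le_iff₀ (mul_pos hx this)]
  calc |sin (a * x)| ≤ |a * x| := abs_sin_le_abs
    _ = |a| * (cosh t)⁻¹ * (x * cosh t) := by
      rw [abs_mul, abs_of_pos hx]
      field_simp

lemma integrableOn_sin_mul_div_mul_cosh_mul (hβ : β ≠ 0) (a : ℝ) :
    IntegrableOn (fun x => sin (a * x) / (x * cosh (β * x))) (Ioi 0) :=
  ((integrable_inv_cosh.comp_mul_left' hβ).const_mul |a|).integrableOn.mono'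
    (by fun_prop : Measurable _).aestronglyMeasurable
    (ae_restrict_of_forall_mem measurableSet_Ioi fun _ hx => abs_sin_mul_div_mul_cosh_le a hx _)

lemma hasDerivAt_integral_sin_mul_div_mul_cosh_mul (hβ : β ≠ 0) (a : ℝ) :
    HasDerivAt (fun a => ∫ x in Ioi 0, sin (a * x) / (x * cosh (β * x)))
      (∫ x in Ioi 0, cos (a * x) / cosh (β * x)) a := by
  refine (hasDerivAt_integral_of_dominated_loc_of_deriv_le
    (F := fun a x => sin (a * x) / (x * cosh (β * x)))
    (F' := fun a x => cos (a * x) / cosh (β * x)) (bound := fun x => (cosh (β * x))⁻¹)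
    Filter.univ_mem (.of_forall fun a => (by fun_prop : Measurable _).aestronglyMeasurable)
    (integrableOn_sin_mul_div_mul_cosh_mul hβ a)
    (by fun_prop : Measurable _).aestronglyMeasurable
    (.of_forall fun x a _ => abs_cos_div_cosh_le _ _)
    (integrable_inv_cosh.comp_mul_left' hβ).integrableOn
    (ae_restrict_of_forall_mem measurableSet_Ioi fun x hx a _ => ?_)).2
  refine (((hasDerivAt_sin (a * x)).comp a (hasDerivAt_mul_const x)).div_const
    (x * cosh (β * x))).congr_deriv ?_
  rw [mul_comm (cos _) x, mul_div_mul_left _ _ (ne_of_gt hx)]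

lemma hasDerivAt_two_mul_arctan_exp_mul (c x : ℝ) :
    HasDerivAt (fun x => 2 * arctan (exp (x * c))) (c / cosh (x * c)) x := by
  refine ((((hasDerivAt_mul_const c).exp).arctan).const_mul 2).congr_deriv ?_
  rw [cosh_eq, exp_neg]
  field_simp
  ring

lemma integral_Ioi_sin_mul_div_mul_cosh_mul (hβ : 0 < β) (a : ℝ) :
    ∫ x in Ioi 0, sin (a * x) / (x * cosh (β * x)) =
      2 * arctan (exp (a * π / (2 * β))) - π / 2 := by
  have hS (a : ℝ) : HasDerivAt (fun a => ∫ x in Ioi 0, sin (a * x) / (x * cosh (β * x)))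
      (π / (2 * β) / cosh (a * (π / (2 * β)))) a := by
    convert hasDerivAt_integral_sin_mul_div_mul_cosh_mul hβ.ne' a using 1
    rw [integral_Ioi_cos_mul_div_cosh_mul hβ, mul_div_assoc, div_div]
  have hG (a : ℝ) := (hasDerivAt_two_mul_arctan_exp_mul (π / (2 * β)) a).sub_const (π / 2)
  have := eq_of_fderiv_eq (fun a => (hS a).differentiableAt) (fun a => (hG a).differentiableAt)
    (fun a => by rw [(hS a).hasFDerivAt.fderiv, (hG a).hasFDerivAt.fderiv]) 0
    (by simp only [zero_mul, sin_zero, zero_div, integral_zero, exp_zero, arctan_one]; ring)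
  simpa only [mul_div_assoc] using congrFun this a

lemma arctan_sub_arctan {x y : ℝ} (h : -1 < x * y) :
    arctan x - arctan y = arctan ((x - y) / (1 + x * y)) := by
  rw [sub_eq_add_neg, ← arctan_neg, arctan_add (by linarith)]
  ring_nf

end Real

theorem stmt_11 (a b β : ℝ) (hβ : 0 < β) :
    ∫ x in Set.Ioi (0:ℝ), (Real.sin (a * x) - Real.sin (b * x)) / (x * Real.cosh (β * x)) =
      2 * Real.arctan ((Real.exp (a * π / (2 * β)) - Real.exp (b * π / (2 * β))) /
        (1 + Real.exp ((a + b) * π / (2 * β)))) := by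
  have huv : -1 < exp (a * π / (2 * β)) * exp (b * π / (2 * β)) :=
    neg_one_lt_zero.trans (by positivity)
  simp only [sub_div (sin _)]
  rw [integral_sub (integrableOn_sin_mul_div_mul_cosh_mul hβ.ne' a)
      (integrableOn_sin_mul_div_mul_cosh_mul hβ.ne' b),
    integral_Ioi_sin_mul_div_mul_cosh_mul hβ, integral_Ioi_sin_mul_div_mul_cosh_mul hβ,
    add_mul, add_div, exp_add, ← arctan_sub_arctan huv]
  ring
end

section
/- For all real x with sin(b x) ≠ 0 and real a > 0, 1/(cosh(a x) + cos(b x)) = −(2/sin(b x)) · ∑_{n=1}^∞ (−1)^n e^{−a n x} sin(n b x), the series converging absolutely for x > 0. -/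
/-!
With `z = -e^{-ax} e^{ibx}` (so `‖z‖ < 1`), the series is the imaginary part of the geometric
series `∑_{n ≥ 1} z^n = z / (1 - z)`, and
`Im (z / (1 - z)) = -e^{-ax} sin(bx) / (1 + 2 e^{-ax} cos(bx) + e^{-2ax})`,
whose denominator is `2 e^{-ax} (cosh(ax) + cos(bx))`.
-/

open Real

theorem hasSum_pow_succ_of_norm_lt_one {K : Type*} [NormedDivisionRing K] {z : K} (hz : ‖z‖ < 1) :
    HasSum (fun n : ℕ => z ^ (n + 1)) (z * (1 - z)⁻¹) := by
  simpa only [← pow_succ'] using (hasSum_geometric_of_norm_lt_one hz).mul_left z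

theorem Complex.im_ofReal_mul_exp_mul_I_pow (q θ : ℝ) (n : ℕ) :
    ((q * Complex.exp (θ * Complex.I)) ^ n).im = q ^ n * Real.sin (n * θ) := by
  rw [mul_pow, ← Complex.exp_nat_mul, ← Complex.ofReal_pow, ← mul_assoc, ← Complex.ofReal_natCast,
    ← Complex.ofReal_mul, Complex.im_ofReal_mul, Complex.exp_ofReal_mul_I_im]

theorem Complex.im_mul_inv_one_sub_ofReal_mul_exp_mul_I (q θ : ℝ) :
    (q * Complex.exp (θ * Complex.I) * (1 - q * Complex.exp (θ * Complex.I))⁻¹).im =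
      q * Real.sin θ / (1 - 2 * q * Real.cos θ + q ^ 2) := by
  set z := (q : ℂ) * Complex.exp (θ * Complex.I)
  have hre : z.re = q * Real.cos θ := by simp [z, Complex.exp_ofReal_mul_I_re]
  have him : z.im = q * Real.sin θ := by simp [z, Complex.exp_ofReal_mul_I_im]
  have hnormSq : Complex.normSq (1 - z) = 1 - 2 * q * Real.cos θ + q ^ 2 := by
    rw [Complex.normSq_apply]
    simp only [Complex.sub_re, Complex.sub_im, Complex.one_re, Complex.one_im, hre, him]
    linear_combination q ^ 2 * Real.sin_sq_add_cos_sq θ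
  rw [Complex.mul_im, Complex.inv_re, Complex.inv_im, hnormSq]
  simp only [Complex.sub_re, Complex.sub_im, Complex.one_re, Complex.one_im, hre, him]
  ring

theorem hasSum_pow_succ_mul_sin {q : ℝ} (hq : |q| < 1) (θ : ℝ) :
    HasSum (fun n : ℕ => q ^ (n + 1) * Real.sin ((n + 1) * θ))
      (q * Real.sin θ / (1 - 2 * q * Real.cos θ + q ^ 2)) := by
  have hz : ‖(q : ℂ) * Complex.exp (θ * Complex.I)‖ < 1 := by
    rwa [norm_mul, Complex.norm_exp_ofReal_mul_I, mul_one, Complex.norm_real, Real.norm_eq_abs]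
  have h := Complex.hasSum_im (hasSum_pow_succ_of_norm_lt_one hz)
  rw [Complex.im_mul_inv_one_sub_ofReal_mul_exp_mul_I] at h
  simpa only [Complex.im_ofReal_mul_exp_mul_I_pow, Nat.cast_succ] using h

theorem stmt_13 (a b x : ℝ) (ha : 0 < a) (hx : 0 < x) (hs : Real.sin (b * x) ≠ 0) :
    1 / (Real.cosh (a * x) + Real.cos (b * x)) =
      -(2 / Real.sin (b * x)) *
        ∑' n : ℕ, (-1 : ℝ) ^ (n + 1) * Real.exp (-a * (n + 1) * x) *
          Real.sin ((n + 1) * b * x) := by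
  set e := Real.exp (-(a * x))
  have he : 0 < e := Real.exp_pos _
  have he1 : e < 1 := Real.exp_lt_one_iff.mpr (by nlinarith)
  have hq : |-e| < 1 := by rwa [abs_neg, abs_of_pos he]
  have hterm (n : ℕ) : (-e) ^ (n + 1) * Real.sin ((n + 1) * (b * x)) =
      (-1 : ℝ) ^ (n + 1) * Real.exp (-a * (n + 1) * x) * Real.sin ((n + 1) * b * x) := by
    rw [neg_pow, ← Real.exp_nat_mul]
    push_cast
    ring_nf
  have hsum := hasSum_pow_succ_mul_sin hq (b * x)
  simp only [hterm] at hsum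
  rw [hsum.tsum_eq]
  have hcosh : Real.cosh (a * x) = (e⁻¹ + e) / 2 := by
    simp only [e, Real.cosh_eq, Real.exp_neg, inv_inv]
  have hc := Real.neg_one_le_cos (b * x)
  have hden : 0 < 1 - 2 * -e * Real.cos (b * x) + (-e) ^ 2 := by nlinarith
  rw [hcosh]
  field_simp
  ring
end

section
/- For a > 0 and real z with 0 ≤ z < a², ∑_{n=1}^∞ (zⁿ/n)·ζ(2n, a) = −2 ln Γ(a) + ln Γ(a − √z) + ln Γ(a + √z). -/
open Real Filter Topology

private lemma log_GammaSeq_eq (s : ℝ) (hs : 0 < s) (N : ℕ) (hN : 1 ≤ N) :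
    Real.log (Real.GammaSeq s N) =
      s * Real.log N + Real.log (Nat.factorial N) -
        ∑ j ∈ Finset.range (N + 1), Real.log (s + j) := by
  have hN0 : (0:ℝ) < N := by exact_mod_cast hN
  have hprod : (0:ℝ) < ∏ j ∈ Finset.range (N + 1), (s + j) := by
    apply Finset.prod_pos
    intro j _
    positivity
  rw [Real.GammaSeq, Real.log_div (by positivity) hprod.ne',
    Real.log_mul (by positivity) (by positivity),
    Real.log_rpow hN0, Real.log_prod]
  intro j _
  positivity

theorem stmt_15 (a z : ℝ) (ha : 0 < a) (hz0 : 0 ≤ z) (hz : z < a ^ 2) :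
    ∑' n : ℕ, (z ^ (n + 1) / (n + 1)) *
        ∑' k : ℕ, ((k : ℝ) + a) ^ (-(2 * ((n : ℝ) + 1))) =
      -2 * Real.log (Real.Gamma a) + Real.log (Real.Gamma (a - Real.sqrt z)) +
        Real.log (Real.Gamma (a + Real.sqrt z)) := by
  set x := Real.sqrt z with hxdef
  have hx0 : 0 ≤ x := Real.sqrt_nonneg z
  have hx2 : x ^ 2 = z := Real.sq_sqrt hz0
  have hxa : x < a := by nlinarith
  set f : ℕ → ℕ → ℝ :=
    fun n k => z ^ (n + 1) / (n + 1) * ((k : ℝ) + a) ^ (-(2 * ((n : ℝ) + 1))) with hfdef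
  have hc : ∀ k : ℕ, (0:ℝ) < (k : ℝ) + a := fun k => by positivity
  -- rewrite the general term
  have hterm : ∀ n k : ℕ, f n k = (z / ((k:ℝ)+a) ^ 2) ^ (n+1) / (n+1) := by
    intro n k
    have hc' := hc k
    have h1 : ((k : ℝ) + a) ^ (-(2 * ((n : ℝ) + 1)))
        = (((k:ℝ)+a) ^ (2*(n+1) : ℕ))⁻¹ := by
      rw [show -(2 * ((n : ℝ) + 1)) = -(((2*(n+1) : ℕ)) : ℝ) by push_cast; ring,
        Real.rpow_neg hc'.le, Real.rpow_natCast]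
    rw [hfdef]
    simp only [h1, pow_mul, div_pow]
    ring
  have hr : ∀ k : ℕ, 0 ≤ z / ((k:ℝ)+a) ^ 2 ∧ z / ((k:ℝ)+a) ^ 2 < 1 := by
    intro k
    have hc' := hc k
    have hac : a ≤ (k:ℝ) + a := by
      have : (0:ℝ) ≤ k := Nat.cast_nonneg k
      linarith
    constructor
    · positivity
    · rw [div_lt_one (by positivity)]
      nlinarith
  have hf_nonneg : ∀ n k, 0 ≤ f n k := by
    intro n k
    rw [hterm]
    have := (hr k).1
    positivity
  -- the value of the inner (over n) sum
  set A : ℕ → ℝ := fun k =>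
    2 * Real.log ((k:ℝ) + a) - Real.log ((k:ℝ) + a - x) - Real.log ((k:ℝ) + a + x)
    with hAdef
  have hcx : ∀ k : ℕ, 0 < (k:ℝ) + a - x := by
    intro k
    have : (0:ℝ) ≤ k := Nat.cast_nonneg k
    linarith
  have hcx' : ∀ k : ℕ, 0 < (k:ℝ) + a + x := by
    intro k
    have : (0:ℝ) ≤ k := Nat.cast_nonneg k
    linarith
  have hA : ∀ k : ℕ, HasSum (fun n => f n k) (A k) := by
    intro k
    have habs : |z / ((k:ℝ)+a) ^ 2| < 1 := by
      rw [abs_of_nonneg (hr k).1]; exact (hr k).2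
    have h := hasSum_pow_div_log_of_abs_lt_one habs
    have hval : -Real.log (1 - z / ((k:ℝ)+a) ^ 2) = A k := by
      have hc' := hc k
      have h1 : 1 - z / ((k:ℝ)+a) ^ 2
          = (((k:ℝ)+a - x) * ((k:ℝ)+a + x)) / ((k:ℝ)+a) ^ 2 := by
        field_simp
        nlinarith [hx2]
      rw [h1, Real.log_div (mul_pos (hcx k) (hcx' k)).ne' (by positivity),
        Real.log_mul (hcx k).ne' (hcx' k).ne', Real.log_pow]
      rw [hAdef]
      push_cast
      ring
    rw [← hval]
    refine h.congr_fun fun n => ?_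
    rw [hterm]
  -- summability of the double family
  have hsum : Summable (Function.uncurry fun n k => f n k) := by
    have hg : Summable (fun n : ℕ => (z / a ^ 2) ^ n) := by
      apply summable_geometric_of_lt_one (by positivity)
      rw [div_lt_one (by positivity)]
      exact hz
    have hh0 : Summable (fun k : ℕ => 1 / |(k:ℝ) + a| ^ (2:ℝ)) :=
      (Real.summable_one_div_nat_add_rpow a 2).mpr one_lt_two
    have hh : Summable (fun k : ℕ => z / ((k:ℝ)+a) ^ 2) := by
      refine (hh0.mul_left z).congr fun k => ?_
      rw [abs_of_pos (hc k), ← Real.rpow_natCast ((k:ℝ)+a) 2]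
      push_cast
      rw [mul_one_div, div_eq_div_iff] <;> positivity
    refine Summable.of_nonneg_of_le (fun p => hf_nonneg p.1 p.2) ?_
      (hg.mul_of_nonneg hh (fun n => by positivity) (fun k => (hr k).1))
    rintro ⟨n, k⟩
    have hrk := hr k
    have hle : z / ((k:ℝ)+a) ^ 2 ≤ z / a ^ 2 := by
      have hk : (0:ℝ) ≤ k := Nat.cast_nonneg k
      gcongr
      nlinarith
    calc f n k = (z / ((k:ℝ)+a) ^ 2) ^ (n+1) / (n+1) := hterm n k
      _ ≤ (z / ((k:ℝ)+a) ^ 2) ^ (n+1) := by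
          have hb : (1:ℝ) ≤ (n:ℝ) + 1 := by
            have : (0:ℝ) ≤ n := Nat.cast_nonneg n
            linarith
          exact div_le_self (pow_nonneg hrk.1 _) hb
      _ = (z / ((k:ℝ)+a) ^ 2) ^ n * (z / ((k:ℝ)+a) ^ 2) := by ring
      _ ≤ (z / a ^ 2) ^ n * (z / ((k:ℝ)+a) ^ 2) := by
          apply mul_le_mul_of_nonneg_right _ hrk.1
          exact pow_le_pow_left₀ hrk.1 hle n
  -- left side equals double sum, swap
  have hL : (∑' n : ℕ, (z ^ (n + 1) / (n + 1)) *
        ∑' k : ℕ, ((k : ℝ) + a) ^ (-(2 * ((n : ℝ) + 1)))) = ∑' k, ∑' n, f n k := by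
    have h1 : (∑' n : ℕ, (z ^ (n + 1) / (n + 1)) *
        ∑' k : ℕ, ((k : ℝ) + a) ^ (-(2 * ((n : ℝ) + 1)))) = ∑' n, ∑' k, f n k :=
      tsum_congr fun n => (tsum_mul_left).symm
    rw [h1, ← Summable.tsum_comm hsum]
  rw [hL]
  have hAeq : ∀ k, ∑' n, f n k = A k := fun k => (hA k).tsum_eq
  simp_rw [hAeq]
  -- now sum over k using GammaSeq
  set L : ℝ := -2 * Real.log (Real.Gamma a) + Real.log (Real.Gamma (a - x)) +
      Real.log (Real.Gamma (a + x)) with hLdef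
  have hpartial : ∀ N : ℕ, 1 ≤ N →
      ∑ k ∈ Finset.range (N + 1), A k =
        Real.log (Real.GammaSeq (a - x) N) + Real.log (Real.GammaSeq (a + x) N)
          - 2 * Real.log (Real.GammaSeq a N) := by
    intro N hN
    rw [log_GammaSeq_eq (a - x) (by linarith) N hN,
      log_GammaSeq_eq (a + x) (by linarith) N hN,
      log_GammaSeq_eq a ha N hN]
    have e2 : ∀ j ∈ Finset.range (N+1), Real.log (a - x + (j:ℝ)) = Real.log ((j:ℝ) + a - x) :=
      fun j _ => by ring_nf
    have e3 : ∀ j ∈ Finset.range (N+1), Real.log (a + x + (j:ℝ)) = Real.log ((j:ℝ) + a + x) :=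
      fun j _ => by ring_nf
    have e4 : ∀ j ∈ Finset.range (N+1), Real.log (a + (j:ℝ)) = Real.log ((j:ℝ) + a) :=
      fun j _ => by ring_nf
    rw [Finset.sum_congr rfl e2, Finset.sum_congr rfl e3, Finset.sum_congr rfl e4, hAdef]
    rw [Finset.sum_sub_distrib, Finset.sum_sub_distrib, ← Finset.mul_sum]
    ring
  -- limit of partial sums
  have hGpos : ∀ s : ℝ, 0 < s → 0 < Real.Gamma s := fun s hs => Real.Gamma_pos_of_pos hs
  have hlog : ∀ s : ℝ, 0 < s →
      Tendsto (fun N => Real.log (Real.GammaSeq s N)) atTop (𝓝 (Real.log (Real.Gamma s))) :=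
    fun s hs => ((Real.continuousAt_log (hGpos s hs).ne').tendsto).comp
      (Real.GammaSeq_tendsto_Gamma s)
  have htend1 : Tendsto (fun N => ∑ k ∈ Finset.range (N + 1), A k) atTop (𝓝 L) := by
    have h : Tendsto (fun N => Real.log (Real.GammaSeq (a - x) N)
        + Real.log (Real.GammaSeq (a + x) N) - 2 * Real.log (Real.GammaSeq a N)) atTop
        (𝓝 (Real.log (Real.Gamma (a - x)) + Real.log (Real.Gamma (a + x))
          - 2 * Real.log (Real.Gamma a))) :=
      ((hlog (a - x) (by linarith)).add (hlog (a + x) (by linarith))).sub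
        ((hlog a ha).const_mul 2)
    have hLeq : Real.log (Real.Gamma (a - x)) + Real.log (Real.Gamma (a + x))
        - 2 * Real.log (Real.Gamma a) = L := by rw [hLdef]; ring
    rw [hLeq] at h
    refine Tendsto.congr' ?_ h
    filter_upwards [eventually_ge_atTop 1] with N hN
    exact (hpartial N hN).symm
  have htend : Tendsto (fun N => ∑ k ∈ Finset.range N, A k) atTop (𝓝 L) :=
    (tendsto_add_atTop_iff_nat (f := fun N => ∑ k ∈ Finset.range N, A k) (l := 𝓝 L) 1).mp htend1
  -- A is nonneg, partial sums bounded by L, hence summable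
  have hA_nonneg : ∀ k, 0 ≤ A k := by
    intro k
    rw [← hAeq k]
    exact tsum_nonneg fun n => hf_nonneg n k
  have hmono : Monotone fun N => ∑ k ∈ Finset.range N, A k := by
    intro m n hmn
    exact Finset.sum_le_sum_of_subset_of_nonneg (Finset.range_subset_range.mpr hmn)
      (fun k _ _ => hA_nonneg k)
  have hSummA : Summable A :=
    summable_of_sum_range_le hA_nonneg (fun n => hmono.ge_of_tendsto htend n)
  have := hSummA.hasSum.tendsto_sum_nat
  have hAsum : ∑' k, A k = L := tendsto_nhds_unique this htend
  rw [hAsum, hLdef]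
end
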